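/- (Theorem 1.) Let s ≥ 1 be an integer and let R be a real number with R ≥ 1/s. Then the error exponent of the disjunctive decision rule satisfies E_s(R) = 0. -/

import Mathlib

/-- The `j`-th codeword (column) of the binary code `X`. -/
def col {N t : ℕ} (X : Fin N → Fin t → Bool) (j : Fin t) : Fin N → Bool :=
  fun i => X i j

/-- The response vector `x(S)`: componentwise Boolean sum of the codewords
`x(j)`, `j ∈ S` (the all-zero vector when `S = ∅`). -/
noncomputable def resp {N t : ℕ} (X : Fin N → Fin t → Bool) (S : Finset (Fin t)) : Fin N → Bool :=
  fun i => S.sup (fun j => X i j)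

/-- The column `u` covers the column `v` if `u ∨ v = u`. -/
def Covers {N : ℕ} (u v : Fin N → Bool) : Prop :=
  ∀ i, (u i || v i) = u i

/-- `X` is a disjunctive `s`-code: for every `S ⊆ [t]` with `|S| = s`,
the response vector `x(S)` covers the codeword `x(j)` iff `j ∈ S`. -/
def IsDisjunctiveCode {N t : ℕ} (s : ℕ) (X : Fin N → Fin t → Bool) : Prop :=
  ∀ S : Finset (Fin t), S.card = s →
    ∀ j : Fin t, Covers (resp X S) (col X j) ↔ j ∈ S

/-- The weight of a binary column: its number of `1`-entries. -/
def weight {N : ℕ} (u : Fin N → Bool) : ℕ :=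
  (Finset.univ.filter (fun i => u i = true)).card

instance {N : ℕ} (u v : Fin N → Bool) : Decidable (Covers u v) :=
  inferInstanceAs (Decidable (∀ i, (u i || v i) = u i))

/-- The number of codewords of `X` covered by the response vector `x(S)`. -/
noncomputable def covNum {N t : ℕ} (X : Fin N → Fin t → Bool) (S : Finset (Fin t)) : ℕ :=
  (Finset.univ.filter (fun j : Fin t => Covers (resp X S) (col X j))).card

/-- `Pr{accept H₁ | H₀}` for the disjunctive decision rule. -/
noncomputable def errDisjH1 (s : ℕ) {N t : ℕ} (p : ℕ → ℝ) (X : Fin N → Fin t → Bool) : ℝ :=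
  ∑ k ∈ Finset.range (s + 1),
    (p k / ∑ l ∈ Finset.range (s + 1), p l) *
      (((Finset.univ.filter
          (fun S : Finset (Fin t) => S.card = k ∧ s + 1 ≤ covNum X S)).card : ℝ) /
        (Nat.choose t k : ℝ))

/-- `Pr{accept H₀ | H₁}` for the disjunctive decision rule. -/
noncomputable def errDisjH0 (s : ℕ) {N t : ℕ} (p : ℕ → ℝ) (X : Fin N → Fin t → Bool) : ℝ :=
  ∑ k ∈ Finset.Icc (s + 1) t,
    (p k / ∑ l ∈ Finset.Icc (s + 1) t, p l) *
      (((Finset.univ.filter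
          (fun S : Finset (Fin t) => S.card = k ∧ covNum X S ≤ s)).card : ℝ) /
        (Nat.choose t k : ℝ))

/-- The maximal error probability `ε'_s(p, X)` of the disjunctive decision rule. -/
noncomputable def maxErrDisj (s : ℕ) {N t : ℕ} (p : ℕ → ℝ) (X : Fin N → Fin t → Bool) : ℝ :=
  max (errDisjH1 s p X) (errDisjH0 s p X)

/-- The universal error probability `ε'^N_s(R)` of the disjunctive decision rule:
the sup over probability vectors `p` of the inf over binary codes `X` of length
`N` and size `t = ⌊2^{RN}⌋` of the maximal error probability `ε'_s(p, X)`. -/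
noncomputable def univErrDisj (s : ℕ) (R : ℝ) (N : ℕ) : ℝ :=
  sSup { e : ℝ | ∃ p : ℕ → ℝ, (∀ k, 0 ≤ p k) ∧
    (∑ k ∈ Finset.range (⌊(2 : ℝ) ^ (R * (N : ℝ))⌋₊ + 1), p k = 1) ∧
    e = sInf { e' : ℝ | ∃ X : Fin N → Fin ⌊(2 : ℝ) ^ (R * (N : ℝ))⌋₊ → Bool,
      e' = maxErrDisj s p X } }

/-- The error exponent `E_s(R)` of the disjunctive decision rule. -/
noncomputable def EexpDisj (s : ℕ) (R : ℝ) : ℝ :=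
  Filter.limsup (fun N : ℕ => (-Real.logb 2 (univErrDisj s R N)) / (N : ℝ)) Filter.atTop


open Finset

section Aux

lemma resp_covers_of_le {N t : ℕ} (X : Fin N → Fin t → Bool) {S S' : Finset (Fin t)} {j : Fin t}
    (hj : j ∈ S') (h : ∀ i, resp X S' i = true → resp X S i = true) :
    Covers (resp X S) (col X j) := by
  intro i
  have h1 : X i j ≤ S'.sup (fun j => X i j) := Finset.le_sup hj
  have h2 : resp X S' i = true → resp X S i = true := h i
  simp only [resp, col] at *
  revert h1 h2
  cases (X i j) <;> cases (S'.sup fun j => X i j) <;> cases (S.sup fun j => X i j) <;> simp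

lemma card_le_covNum {N t : ℕ} (X : Fin N → Fin t → Bool) (S : Finset (Fin t)) :
    S.card ≤ covNum X S :=
  Finset.card_le_card (fun j hj => Finset.mem_filter.mpr
    ⟨Finset.mem_univ _, resp_covers_of_le X hj (fun _ h => h)⟩)

lemma card_filter_card_eq (t k : ℕ) :
    (Finset.univ.filter (fun S : Finset (Fin t) => S.card = k)).card = t.choose k := by
  rw [← Finset.powerset_univ, ← Finset.powersetCard_eq_filter, Finset.card_powersetCard,
    Finset.card_univ, Fintype.card_fin]

/-- The response set of `S`: coordinates where the response vector is `1`. -/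
noncomputable def respSet {N t : ℕ} (X : Fin N → Fin t → Bool) (S : Finset (Fin t)) :
    Finset (Fin N) :=
  Finset.univ.filter (fun i => resp X S i = true)

lemma covNum_ge_of_respSet_subset {N t : ℕ} (X : Fin N → Fin t → Bool) {s : ℕ}
    {S S' : Finset (Fin t)} (hS : S.card = s) (hS' : S'.card = s) (hne : S ≠ S')
    (hsub : respSet X S' ⊆ respSet X S) : s + 1 ≤ covNum X S := by
  have hmono : ∀ i, resp X S' i = true → resp X S i = true := by
    intro i hi
    have := hsub (Finset.mem_filter.mpr ⟨Finset.mem_univ i, hi⟩)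
    exact (Finset.mem_filter.mp this).2
  have hcov : S ∪ S' ⊆ Finset.univ.filter (fun j : Fin t => Covers (resp X S) (col X j)) := by
    intro j hj
    rcases Finset.mem_union.mp hj with hj | hj
    · exact Finset.mem_filter.mpr ⟨Finset.mem_univ _, resp_covers_of_le X hj (fun _ h => h)⟩
    · exact Finset.mem_filter.mpr ⟨Finset.mem_univ _, resp_covers_of_le X hj hmono⟩
  have hcard : s + 1 ≤ (S ∪ S').card := by
    have hss : S ⊂ S ∪ S' := by
      rw [Finset.ssubset_iff_subset_ne]
      refine ⟨Finset.subset_union_left, ?_⟩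
      intro h
      have h2 : S' ⊆ S := by rw [h]; exact Finset.subset_union_right
      exact hne (Finset.eq_of_subset_of_card_le h2 (by omega)).symm
    have := Finset.card_lt_card hss
    omega
  exact hcard.trans (Finset.card_le_card hcov)

lemma good_card_le {N t : ℕ} (s : ℕ) (X : Fin N → Fin t → Bool) :
    (Finset.univ.filter (fun S : Finset (Fin t) => S.card = s ∧ covNum X S ≤ s)).card
      ≤ N.choose (N / 2) := by
  classical
  set G := Finset.univ.filter (fun S : Finset (Fin t) => S.card = s ∧ covNum X S ≤ s) with hG
  have key : ∀ S ∈ G, ∀ S' ∈ G, S ≠ S' → ¬ respSet X S' ⊆ respSet X S := by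
    intro S hS S' hS' hne hsub
    have h1 := (Finset.mem_filter.mp hS).2
    have h1' := (Finset.mem_filter.mp hS').2
    have := covNum_ge_of_respSet_subset X h1.1 h1'.1 hne hsub
    omega
  have hinj : Set.InjOn (respSet X) ↑G := by
    intro S hS S' hS' h
    by_contra hne
    exact key S hS S' hS' hne (le_of_eq h.symm)
  have hanti : IsAntichain (· ⊆ ·)
      ((G.image (respSet X) : Finset (Finset (Fin N))) : Set (Finset (Fin N))) := by
    intro a ha b hb hne hsub
    obtain ⟨S, hS, rfl⟩ := Finset.mem_image.mp (by exact_mod_cast ha)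
    obtain ⟨S', hS', rfl⟩ := Finset.mem_image.mp (by exact_mod_cast hb)
    have hSne : S' ≠ S := fun h => hne (by rw [h])
    exact key S' hS' S hS hSne hsub
  have hsp := IsAntichain.sperner hanti
  rw [Fintype.card_fin] at hsp
  calc G.card = (G.image (respSet X)).card := (Finset.card_image_of_injOn hinj).symm
    _ ≤ N.choose (N / 2) := hsp

lemma bad_count {N t : ℕ} (s : ℕ) (X : Fin N → Fin t → Bool) :
    t.choose s ≤ (Finset.univ.filter
        (fun S : Finset (Fin t) => S.card = s ∧ s + 1 ≤ covNum X S)).card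
      + N.choose (N / 2) := by
  classical
  have heq : Finset.univ.filter (fun S : Finset (Fin t) => S.card = s ∧ covNum X S ≤ s)
      = (Finset.univ.filter (fun S : Finset (Fin t) => S.card = s)).filter
          (fun S => ¬ s + 1 ≤ covNum X S) := by
    rw [Finset.filter_filter]
    apply Finset.filter_congr
    intro S _
    simp [Nat.lt_succ_iff]
  have heq2 : Finset.univ.filter (fun S : Finset (Fin t) => S.card = s ∧ s + 1 ≤ covNum X S)
      = (Finset.univ.filter (fun S : Finset (Fin t) => S.card = s)).filter
          (fun S => s + 1 ≤ covNum X S) := (Finset.filter_filter _ _ _).symm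
  have hsplit := Finset.card_filter_add_card_filter_not
    (s := Finset.univ.filter (fun S : Finset (Fin t) => S.card = s))
    (p := fun S => s + 1 ≤ covNum X S)
  rw [card_filter_card_eq t s] at hsplit
  rw [heq2]
  have hg := good_card_le s X
  rw [heq] at hg
  omega

/-- Generic bound: a convex-type combination of ratios in `[0,1]` is in `[0,1]`. -/
lemma sum_ratio_le_one (u : Finset ℕ) (p : ℕ → ℝ) (hp : ∀ k, 0 ≤ p k) (r : ℕ → ℝ)
    (hr0 : ∀ k, 0 ≤ r k) (hr1 : ∀ k, r k ≤ 1) :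
    ∑ k ∈ u, (p k / ∑ l ∈ u, p l) * r k ≤ 1 := by
  have hc0 : 0 ≤ ∑ l ∈ u, p l := Finset.sum_nonneg fun l _ => hp l
  have step : ∑ k ∈ u, (p k / ∑ l ∈ u, p l) * r k ≤ ∑ k ∈ u, p k / ∑ l ∈ u, p l := by
    refine Finset.sum_le_sum fun k _ => ?_
    exact mul_le_of_le_one_right (div_nonneg (hp k) hc0) (hr1 k)
  refine step.trans ?_
  rw [← Finset.sum_div]
  rcases eq_or_lt_of_le hc0 with h | h
  · rw [← h]; simp
  · rw [div_self h.ne']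

lemma ratio_nonneg_aux {t k : ℕ} (P : Finset (Fin t) → Prop) [DecidablePred P] :
    (0:ℝ) ≤ ((Finset.univ.filter (fun S : Finset (Fin t) => S.card = k ∧ P S)).card : ℝ) /
      (t.choose k : ℝ) := by positivity

lemma ratio_le_one_aux {t k : ℕ} (P : Finset (Fin t) → Prop) [DecidablePred P] :
    ((Finset.univ.filter (fun S : Finset (Fin t) => S.card = k ∧ P S)).card : ℝ) /
      (t.choose k : ℝ) ≤ 1 := by
  apply div_le_one_of_le₀
  · have : (Finset.univ.filter (fun S : Finset (Fin t) => S.card = k ∧ P S))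
        ⊆ Finset.univ.filter (fun S : Finset (Fin t) => S.card = k) := by
      intro S hS
      exact Finset.mem_filter.mpr ⟨Finset.mem_univ _, ((Finset.mem_filter.mp hS).2).1⟩
    have h := Finset.card_le_card this
    rw [card_filter_card_eq t k] at h
    exact_mod_cast h
  · positivity

lemma errDisjH1_nonneg (s : ℕ) {N t : ℕ} (p : ℕ → ℝ) (hp : ∀ k, 0 ≤ p k)
    (X : Fin N → Fin t → Bool) : 0 ≤ errDisjH1 s p X := by
  refine Finset.sum_nonneg fun k _ => ?_
  have h1 : 0 ≤ p k / ∑ l ∈ Finset.range (s+1), p l :=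
    div_nonneg (hp k) (Finset.sum_nonneg fun l _ => hp l)
  exact mul_nonneg h1 (ratio_nonneg_aux _)

lemma errDisjH0_nonneg (s : ℕ) {N t : ℕ} (p : ℕ → ℝ) (hp : ∀ k, 0 ≤ p k)
    (X : Fin N → Fin t → Bool) : 0 ≤ errDisjH0 s p X := by
  refine Finset.sum_nonneg fun k _ => ?_
  have h1 : 0 ≤ p k / ∑ l ∈ Finset.Icc (s+1) t, p l :=
    div_nonneg (hp k) (Finset.sum_nonneg fun l _ => hp l)
  exact mul_nonneg h1 (ratio_nonneg_aux _)

lemma errDisjH1_le_one (s : ℕ) {N t : ℕ} (p : ℕ → ℝ) (hp : ∀ k, 0 ≤ p k)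
    (X : Fin N → Fin t → Bool) : errDisjH1 s p X ≤ 1 :=
  sum_ratio_le_one _ p hp _ (fun _ => ratio_nonneg_aux _) (fun _ => ratio_le_one_aux _)

lemma errDisjH0_le_one (s : ℕ) {N t : ℕ} (p : ℕ → ℝ) (hp : ∀ k, 0 ≤ p k)
    (X : Fin N → Fin t → Bool) : errDisjH0 s p X ≤ 1 :=
  sum_ratio_le_one _ p hp _ (fun _ => ratio_nonneg_aux _) (fun _ => ratio_le_one_aux _)

lemma maxErrDisj_nonneg (s : ℕ) {N t : ℕ} (p : ℕ → ℝ) (hp : ∀ k, 0 ≤ p k)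
    (X : Fin N → Fin t → Bool) : 0 ≤ maxErrDisj s p X :=
  le_max_of_le_left (errDisjH1_nonneg s p hp X)

lemma maxErrDisj_le_one (s : ℕ) {N t : ℕ} (p : ℕ → ℝ) (hp : ∀ k, 0 ≤ p k)
    (X : Fin N → Fin t → Bool) : maxErrDisj s p X ≤ 1 :=
  max_le (errDisjH1_le_one s p hp X) (errDisjH0_le_one s p hp X)

/-- The two-point prior concentrated on `{s, s+1}`. -/
noncomputable def pTwo (s : ℕ) : ℕ → ℝ :=
  fun k => if k = s then 1/2 else if k = s + 1 then 1/2 else 0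

lemma pTwo_nonneg (s : ℕ) : ∀ k, 0 ≤ pTwo s k := by
  intro k
  unfold pTwo
  split <;> [norm_num; skip]
  split <;> norm_num

lemma pTwo_sum {s t : ℕ} (hst : s + 1 ≤ t) :
    ∑ k ∈ Finset.range (t + 1), pTwo s k = 1 := by
  have : ∀ k, pTwo s k = (if k = s then (1/2:ℝ) else 0) + (if k = s + 1 then (1/2:ℝ) else 0) := by
    intro k
    unfold pTwo
    by_cases h1 : k = s
    · have hne : s ≠ s + 1 := by omega
      simp [h1, hne]
    · by_cases h2 : k = s + 1 <;> simp [h1, h2]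
  rw [Finset.sum_congr rfl (fun k _ => this k), Finset.sum_add_distrib,
    Finset.sum_ite_eq' _ s, Finset.sum_ite_eq' _ (s+1)]
  rw [if_pos (Finset.mem_range.mpr (by omega)), if_pos (Finset.mem_range.mpr (by omega))]
  norm_num

lemma errDisjH1_pTwo (s : ℕ) {N t : ℕ} (X : Fin N → Fin t → Bool) :
    errDisjH1 s (pTwo s) X =
      ((Finset.univ.filter
          (fun S : Finset (Fin t) => S.card = s ∧ s + 1 ≤ covNum X S)).card : ℝ) /
        (t.choose s : ℝ) := by
  have hden : ∑ l ∈ Finset.range (s + 1), pTwo s l = 1/2 := by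
    have : ∀ l ∈ Finset.range (s+1), pTwo s l = if l = s then (1/2:ℝ) else 0 := by
      intro l hl
      rw [Finset.mem_range] at hl
      unfold pTwo
      by_cases h1 : l = s
      · simp [h1]
      · have h2 : l ≠ s + 1 := by omega
        simp [h1, h2]
    rw [Finset.sum_congr rfl this, Finset.sum_ite_eq' _ s,
      if_pos (Finset.mem_range.mpr (by omega))]
  unfold errDisjH1
  rw [hden]
  rw [Finset.sum_eq_single s]
  · unfold pTwo
    simp
  · intro k hk hks
    rw [Finset.mem_range] at hk
    have : pTwo s k = 0 := by
      unfold pTwo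
      have h2 : k ≠ s + 1 := by omega
      simp [hks, h2]
    rw [this]
    simp
  · intro h
    exact absurd (Finset.mem_range.mpr (by omega)) h

lemma mul_sqrt_le_of_sq {a b x y : ℝ} (ha : 0 ≤ a) (hb : 0 ≤ b) (hy : 0 ≤ y)
    (h : a^2 * x ≤ b^2 * y) : a * Real.sqrt x ≤ b * Real.sqrt y := by
  have h1 : a * Real.sqrt x = Real.sqrt (a^2 * x) := by
    rw [Real.sqrt_mul (by positivity), Real.sqrt_sq ha]
  have h2 : b * Real.sqrt y = Real.sqrt (b^2 * y) := by
    rw [Real.sqrt_mul (by positivity), Real.sqrt_sq hb]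
  rw [h1, h2]
  exact Real.sqrt_le_sqrt h

lemma centralBinom_sqrt_le (m : ℕ) :
    (Nat.centralBinom m : ℝ) * Real.sqrt ((m:ℝ) + 1) ≤ 4 ^ m := by
  induction m with
  | zero => simp [Nat.centralBinom_zero]
  | succ m ih =>
    have key : ((m:ℝ) + 1) * (Nat.centralBinom (m+1) : ℝ)
        = 2 * (2*(m:ℝ)+1) * (Nat.centralBinom m : ℝ) := by
      have := Nat.succ_mul_centralBinom_succ m
      have h2 : (((m+1) * Nat.centralBinom (m+1) : ℕ) : ℝ)
          = ((2 * (2*m+1) * Nat.centralBinom m : ℕ) : ℝ) := by rw [this]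
      push_cast at h2
      linarith
    have hm1 : (0:ℝ) < (m:ℝ) + 1 := by positivity
    have hc : (0:ℝ) ≤ (Nat.centralBinom m : ℝ) := Nat.cast_nonneg _
    have hA : 2 * (2*(m:ℝ)+1) * Real.sqrt ((m:ℝ)+1+1) ≤ 4 * ((m:ℝ)+1) * Real.sqrt ((m:ℝ)+1) := by
      apply mul_sqrt_le_of_sq (by positivity) (by positivity) (by positivity)
      nlinarith [sq_nonneg ((m:ℝ))]
    have step : ((m:ℝ)+1) * ((Nat.centralBinom (m+1) : ℝ) * Real.sqrt ((m:ℝ)+1+1))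
        ≤ ((m:ℝ)+1) * 4^(m+1) := by
      calc ((m:ℝ)+1) * ((Nat.centralBinom (m+1):ℝ) * Real.sqrt ((m:ℝ)+1+1))
          = (Nat.centralBinom m : ℝ) * (2*(2*(m:ℝ)+1) * Real.sqrt ((m:ℝ)+1+1)) := by
            rw [← mul_assoc, key]; ring
        _ ≤ (Nat.centralBinom m : ℝ) * (4*((m:ℝ)+1) * Real.sqrt ((m:ℝ)+1)) :=
            mul_le_mul_of_nonneg_left hA hc
        _ = 4*((m:ℝ)+1) * ((Nat.centralBinom m : ℝ) * Real.sqrt ((m:ℝ)+1)) := by ring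
        _ ≤ 4*((m:ℝ)+1) * 4^m := mul_le_mul_of_nonneg_left ih (by positivity)
        _ = ((m:ℝ)+1) * 4^(m+1) := by ring
    have := le_of_mul_le_mul_left step hm1
    calc (Nat.centralBinom (m+1) : ℝ) * Real.sqrt ((↑(m+1):ℝ) + 1)
        = (Nat.centralBinom (m+1) : ℝ) * Real.sqrt ((m:ℝ)+1+1) := by push_cast; ring_nf
      _ ≤ 4^(m+1) := this

lemma choose_odd_le (m : ℕ) : (2*m+1).choose m ≤ 2 * Nat.centralBinom m := by
  cases m with
  | zero => simp [Nat.centralBinom]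
  | succ k =>
    have h : (2*(k+1)+1).choose (k+1) = (2*(k+1)).choose k + (2*(k+1)).choose (k+1) := by
      have := Nat.choose_succ_succ (2*(k+1)) k
      convert this using 2
    have a := Nat.choose_le_centralBinom k (k+1)
    have b := Nat.choose_le_centralBinom (k+1) (k+1)
    omega

lemma choose_half_sqrt_le (N : ℕ) :
    (N.choose (N / 2) : ℝ) * Real.sqrt ((N:ℝ) / 2) ≤ 2 ^ N := by
  obtain ⟨m, hm | hm⟩ := Nat.even_or_odd' N
  · subst hm
    have hdiv : (2 * m) / 2 = m := by omega
    rw [hdiv]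
    have hch : (2*m).choose m = Nat.centralBinom m := (Nat.centralBinom_eq_two_mul_choose m).symm
    rw [hch]
    have hsq : Real.sqrt ((↑(2*m):ℝ)/2) ≤ Real.sqrt ((m:ℝ)+1) := by
      apply Real.sqrt_le_sqrt; push_cast; linarith
    calc (Nat.centralBinom m : ℝ) * Real.sqrt ((↑(2*m):ℝ)/2)
        ≤ (Nat.centralBinom m : ℝ) * Real.sqrt ((m:ℝ)+1) :=
          mul_le_mul_of_nonneg_left hsq (Nat.cast_nonneg _)
      _ ≤ 4^m := centralBinom_sqrt_le m
      _ = 2^(2*m) := by rw [show (4:ℝ) = 2^2 by norm_num, ← pow_mul]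
  · subst hm
    have hdiv : (2 * m + 1) / 2 = m := by omega
    rw [hdiv]
    have hch : ((2*m+1).choose m : ℝ) ≤ 2 * (Nat.centralBinom m : ℝ) := by
      exact_mod_cast choose_odd_le m
    have hsq : Real.sqrt ((↑(2*m+1):ℝ)/2) ≤ Real.sqrt ((m:ℝ)+1) := by
      apply Real.sqrt_le_sqrt; push_cast; linarith
    have hsq0 : 0 ≤ Real.sqrt ((↑(2*m+1):ℝ)/2) := Real.sqrt_nonneg _
    calc ((2*m+1).choose m : ℝ) * Real.sqrt ((↑(2*m+1):ℝ)/2)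
        ≤ 2 * (Nat.centralBinom m : ℝ) * Real.sqrt ((m:ℝ)+1) := by
          apply mul_le_mul hch hsq hsq0 (by positivity)
      _ = 2 * ((Nat.centralBinom m : ℝ) * Real.sqrt ((m:ℝ)+1)) := by ring
      _ ≤ 2 * 4^m := by linarith [centralBinom_sqrt_le m]
      _ = 2^(2*m+1) := by rw [show (4:ℝ) = 2^2 by norm_num, ← pow_mul, pow_succ]; ring

set_option maxHeartbeats 1000000 in
lemma choose_floor_lower {s : ℕ} (hs : 1 ≤ s) {R : ℝ} (hR : 1/(s:ℝ) ≤ R) {N : ℕ}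
    (hN : s * (2*s*s + s + 2) ≤ N) :
    s + 1 ≤ ⌊(2:ℝ)^(R * (N:ℝ))⌋₊ ∧
      (2:ℝ)^N / (2 * s.factorial) ≤ ((⌊(2:ℝ)^(R * (N:ℝ))⌋₊).choose s : ℝ) := by
  have hs0 : (0:ℝ) < (s:ℝ) := by exact_mod_cast hs
  set t := ⌊(2:ℝ)^(R * (N:ℝ))⌋₊ with ht
  set a := (2:ℝ)^(((N:ℝ)/(s:ℝ)) : ℝ) with ha
  set m := 2*s*s + s + 2 with hm
  clear_value t a m
  have ha0 : 0 < a := by rw [ha]; exact Real.rpow_pos_of_pos (by norm_num) _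
  have h1 : a ≤ (2:ℝ)^(R * (N:ℝ)) := by
    rw [ha]
    apply Real.rpow_le_rpow_of_exponent_le one_le_two
    have : (1/(s:ℝ)) * (N:ℝ) ≤ R * (N:ℝ) :=
      mul_le_mul_of_nonneg_right hR (Nat.cast_nonneg N)
    calc (N:ℝ)/(s:ℝ) = (1/(s:ℝ)) * (N:ℝ) := by ring
      _ ≤ R * (N:ℝ) := this
  have h2 : (2:ℝ)^(R * (N:ℝ)) - 1 < (t:ℝ) := by rw [ht]; exact Nat.sub_one_lt_floor _
  have hma : (m:ℝ) + 1 ≤ a := by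
    have hNm : (m:ℝ) ≤ (N:ℝ)/(s:ℝ) := by
      rw [le_div_iff₀ hs0]
      have : (s*m : ℕ) ≤ N := hN
      calc (m:ℝ) * (s:ℝ) = ((s*m : ℕ) : ℝ) := by push_cast; ring
        _ ≤ (N:ℝ) := by exact_mod_cast this
    have e1 : (2:ℝ)^((m:ℝ) : ℝ) ≤ a := by
      rw [ha]; exact Real.rpow_le_rpow_of_exponent_le one_le_two hNm
    have e2 : (m:ℝ) + 1 ≤ (2:ℝ)^((m:ℝ) : ℝ) := by
      rw [Real.rpow_natCast]
      exact_mod_cast Nat.succ_le_of_lt (Nat.lt_two_pow_self (n := m))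
    linarith
  have hmval : (2:ℝ)*(s:ℝ)*(s:ℝ) + (s:ℝ) + 2 = (m:ℝ) := by rw [hm]; push_cast; ring
  have hta : a - 1 < (t:ℝ) := by linarith
  have hts : s + 1 ≤ t := by
    have h3 : ((s + 1 : ℕ) : ℝ) < ((t : ℕ) : ℝ) := by push_cast; nlinarith [sq_nonneg ((s:ℝ) - 1)]
    exact_mod_cast h3.le
  refine ⟨hts, ?_⟩
  have hst : s ≤ t := by omega
  -- descending factorial lower bound
  have hnat : (t + 1 - s)^s ≤ s.factorial * t.choose s := by
    calc (t + 1 - s)^s ≤ t.descFactorial s := Nat.pow_sub_le_descFactorial t s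
      _ = s.factorial * t.choose s := Nat.descFactorial_eq_factorial_mul_choose t s
  have hcast : ((t + 1 - s : ℕ) : ℝ) = (t:ℝ) + 1 - (s:ℝ) := by
    have : s ≤ t + 1 := by omega
    push_cast [this]
    ring
  have hreal : ((t:ℝ) + 1 - (s:ℝ))^s ≤ (s.factorial : ℝ) * (t.choose s : ℝ) := by
    have := hnat
    have h := (Nat.cast_le (α := ℝ)).mpr this
    push_cast at h
    rw [hcast] at h
    exact_mod_cast h
  have has : (s:ℝ) ≤ a - 1 := by nlinarith
  have hpow : (a - (s:ℝ))^s ≤ ((t:ℝ) + 1 - (s:ℝ))^s := by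
    apply pow_le_pow_left₀ (by linarith) (by linarith)
  -- Bernoulli
  have hfrac : (s:ℝ)/a ≤ 1 := by
    rw [div_le_one ha0]; linarith
  have hb : 1 - (s:ℝ)*((s:ℝ)/a) ≤ (1 - (s:ℝ)/a)^s := by
    have := one_add_mul_le_pow (a := -((s:ℝ)/a)) (by linarith) s
    calc 1 - (s:ℝ)*((s:ℝ)/a) = 1 + (s:ℕ) * (-((s:ℝ)/a)) := by push_cast; ring
      _ ≤ (1 + -((s:ℝ)/a))^s := this
      _ = (1 - (s:ℝ)/a)^s := by ring_nf
  have hhalf : (1/2 : ℝ) ≤ 1 - (s:ℝ)*((s:ℝ)/a) := by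
    have h2s : 2*(s:ℝ)*(s:ℝ) ≤ a := by nlinarith
    have : (s:ℝ)*((s:ℝ)/a) ≤ 1/2 := by
      rw [mul_div_assoc'] 
      rw [div_le_iff₀ ha0]
      nlinarith
    linarith
  have hsplit : (a - (s:ℝ)) = a * (1 - (s:ℝ)/a) := by field_simp
  have hfact : a^s * (1/2 : ℝ) ≤ (a - (s:ℝ))^s := by
    rw [hsplit, mul_pow]
    apply mul_le_mul_of_nonneg_left _ (by positivity)
    calc (1/2 : ℝ) ≤ 1 - (s:ℝ)*((s:ℝ)/a) := hhalf
      _ ≤ (1 - (s:ℝ)/a)^s := hb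
  have haN : a^s = (2:ℝ)^N := by
    rw [ha]
    rw [← Real.rpow_natCast ((2:ℝ)^(((N:ℝ)/(s:ℝ)) : ℝ)) s, ← Real.rpow_mul (by norm_num)]
    rw [div_mul_cancel₀ _ (ne_of_gt hs0)]
    exact Real.rpow_natCast 2 N
  have hfacpos : (0:ℝ) < (s.factorial : ℝ) := by exact_mod_cast s.factorial_pos
  have : (2:ℝ)^N * (1/2) ≤ (s.factorial : ℝ) * (t.choose s : ℝ) := by
    calc (2:ℝ)^N * (1/2) = a^s * (1/2) := by rw [haN]
      _ ≤ (a - (s:ℝ))^s := hfact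
      _ ≤ ((t:ℝ) + 1 - (s:ℝ))^s := hpow
      _ ≤ (s.factorial : ℝ) * (t.choose s : ℝ) := hreal
  rw [div_le_iff₀ (by positivity)]
  nlinarith

lemma univErrSet_le_one {s : ℕ} {R : ℝ} {N : ℕ} {e : ℝ}
    (he : e ∈ { e : ℝ | ∃ p : ℕ → ℝ, (∀ k, 0 ≤ p k) ∧
      (∑ k ∈ Finset.range (⌊(2 : ℝ) ^ (R * (N : ℝ))⌋₊ + 1), p k = 1) ∧
      e = sInf { e' : ℝ | ∃ X : Fin N → Fin ⌊(2 : ℝ) ^ (R * (N : ℝ))⌋₊ → Bool,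
        e' = maxErrDisj s p X } }) : e ≤ 1 := by
  obtain ⟨p, hp, hsum, rfl⟩ := he
  have hmem : maxErrDisj s p (fun _ _ => false)
      ∈ { e' : ℝ | ∃ X : Fin N → Fin ⌊(2 : ℝ) ^ (R * (N : ℝ))⌋₊ → Bool,
        e' = maxErrDisj s p X } := ⟨_, rfl⟩
  refine csInf_le_of_le ⟨0, ?_⟩ hmem (maxErrDisj_le_one s p hp _)
  rintro e' ⟨X, rfl⟩
  exact maxErrDisj_nonneg s p hp X

lemma univErrDisj_le_one (s : ℕ) (R : ℝ) (N : ℕ) : univErrDisj s R N ≤ 1 :=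
  Real.sSup_le (fun _ he => univErrSet_le_one he) zero_le_one

lemma univErrDisj_ge_half {s : ℕ} (hs : 1 ≤ s) {R : ℝ} (hR : 1/(s:ℝ) ≤ R) {N : ℕ}
    (hN1 : s * (2*s*s + s + 2) ≤ N) (hN2 : 32 * (s.factorial * s.factorial) ≤ N) :
    1/2 ≤ univErrDisj s R N := by
  obtain ⟨hts, hch⟩ := choose_floor_lower hs hR hN1
  have hfacpos : (0:ℝ) < (s.factorial : ℝ) := by exact_mod_cast s.factorial_pos
  -- `2 * (N.choose (N/2)) ≤ t.choose s` in `ℝ`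
  have hsqrt : 4 * (s.factorial : ℝ) ≤ Real.sqrt ((N:ℝ)/2) := by
    rw [show (4 * (s.factorial : ℝ)) = Real.sqrt ((4 * s.factorial)^2) by
      rw [Real.sqrt_sq (by positivity)]]
    apply Real.sqrt_le_sqrt
    have : ((32 * (s.factorial * s.factorial) : ℕ) : ℝ) ≤ (N:ℝ) := by exact_mod_cast hN2
    push_cast at this
    nlinarith
  have hkey : 2 * (N.choose (N/2) : ℝ) ≤ ((⌊(2:ℝ)^(R * (N:ℝ))⌋₊).choose s : ℝ) := by
    have h1 := choose_half_sqrt_le N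
    have h2 : (N.choose (N/2) : ℝ) * (4 * (s.factorial : ℝ)) ≤ (2:ℝ)^N := by
      calc (N.choose (N/2) : ℝ) * (4 * (s.factorial : ℝ))
          ≤ (N.choose (N/2) : ℝ) * Real.sqrt ((N:ℝ)/2) :=
            mul_le_mul_of_nonneg_left hsqrt (Nat.cast_nonneg _)
        _ ≤ (2:ℝ)^N := h1
    have h3 : 2 * (N.choose (N/2) : ℝ) ≤ (2:ℝ)^N / (2 * s.factorial) := by
      rw [le_div_iff₀ (by positivity)]
      nlinarith
    linarith
  -- membership of the two-point prior value in the sup set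
  unfold univErrDisj
  set t := ⌊(2:ℝ)^(R * (N:ℝ))⌋₊ with ht
  apply le_csSup_of_le ⟨1, fun _ he => univErrSet_le_one he⟩
    (Set.mem_setOf.mpr ⟨pTwo s, pTwo_nonneg s, pTwo_sum (by omega), rfl⟩)
  refine le_csInf ⟨maxErrDisj s (pTwo s) (fun _ _ => false), (fun _ _ => false), rfl⟩ ?_
  rintro e' ⟨X, rfl⟩
  have hbad := bad_count s X
  have hbadR : (t.choose s : ℝ) ≤
      ((Finset.univ.filter
        (fun S : Finset (Fin t) => S.card = s ∧ s + 1 ≤ covNum X S)).card : ℝ)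
      + (N.choose (N/2) : ℝ) := by exact_mod_cast hbad
  have hpos : (0:ℝ) < (t.choose s : ℝ) := by
    have : 0 < t.choose s := Nat.choose_pos (by omega)
    exact_mod_cast this
  have hratio : (1/2 : ℝ) ≤
      ((Finset.univ.filter
        (fun S : Finset (Fin t) => S.card = s ∧ s + 1 ≤ covNum X S)).card : ℝ)
      / (t.choose s : ℝ) := by
    rw [le_div_iff₀ hpos]
    nlinarith
  have herr := (errDisjH1_pTwo s X).symm
  have h2 : (1/2 : ℝ) ≤
      ((Finset.univ.filter
        (fun S : Finset (Fin ⌊(2:ℝ)^(R * (N:ℝ))⌋₊) => S.card = s ∧ s + 1 ≤ covNum X S)).card : ℝ)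
      / ((⌊(2:ℝ)^(R * (N:ℝ))⌋₊).choose s : ℝ) := hratio
  rw [herr] at h2
  unfold maxErrDisj
  exact le_trans h2 (le_max_left _ _)

end Aux

/-- Theorem 1: the error exponent of the disjunctive decision rule vanishes for
all rates `R ≥ 1/s`. -/
theorem EexpDisj_eq_zero {s : ℕ} (hs : 1 ≤ s) {R : ℝ} (hR : 1 / (s : ℝ) ≤ R) :
    EexpDisj s R = 0 := by
  have hN0 : ∀ᶠ N : ℕ in Filter.atTop,
      (1/2 : ℝ) ≤ univErrDisj s R N ∧ univErrDisj s R N ≤ 1 ∧ 1 ≤ N := by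
    rw [Filter.eventually_atTop]
    refine ⟨s * (2*s*s + s + 2) + 32 * (s.factorial * s.factorial) + 1, fun N hN => ?_⟩
    exact ⟨univErrDisj_ge_half hs hR (by omega) (by omega),
      univErrDisj_le_one s R N, by omega⟩
  have htend : Filter.Tendsto (fun N : ℕ => (-Real.logb 2 (univErrDisj s R N)) / (N : ℝ))
      Filter.atTop (nhds 0) := by
    apply squeeze_zero' (g := fun N : ℕ => 1 / (N : ℝ)) ?_ ?_ tendsto_one_div_atTop_nhds_zero_nat
    · filter_upwards [hN0] with N h
      obtain ⟨h1, h2, _⟩ := h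
      have hlog : Real.logb 2 (univErrDisj s R N) ≤ 0 :=
        Real.logb_nonpos one_lt_two (by linarith) h2
      exact div_nonneg (by linarith) (Nat.cast_nonneg N)
    · filter_upwards [hN0] with N h
      obtain ⟨h1, h2, h3⟩ := h
      have hNpos : (0:ℝ) < (N:ℝ) := by exact_mod_cast h3
      have hhalf : Real.logb 2 (1/2 : ℝ) = -1 := by
        rw [one_div, Real.logb_inv, Real.logb_self_eq_one one_lt_two]
      have hlb : (-1 : ℝ) ≤ Real.logb 2 (univErrDisj s R N) := by
        rw [← hhalf]
        exact Real.logb_le_logb_of_le one_lt_two (by norm_num) h1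
      have hub : -Real.logb 2 (univErrDisj s R N) ≤ 1 := by linarith
      exact div_le_div_of_nonneg_right hub hNpos.le
  exact htend.limsup_eq
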